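/- Let β>0, t>0, r>0, ρ>0 and θ,ψ∈ℝ. Then the Carslaw heat kernel is symmetric under interchange of its two arguments on the cone: H_β(r,θ,ρ,ψ;t) = H_β(ρ,ψ,r,θ;t). -/

import Mathlib

open MeasureTheory

/-- The integrand of the Carslaw heat kernel on the cone of angle `β`:
`α ↦ e^{rρ cos(α−θ)/(2t)} · cot(π(α−ψ)/β)`. -/
noncomputable def carslawF (β t r ρ θ ψ : ℝ) (α : ℂ) : ℂ :=
  Complex.exp ((r : ℂ) * (ρ : ℂ) * Complex.cos (α - (θ : ℂ)) / (2 * (t : ℂ))) *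
    Complex.cot ((Real.pi : ℂ) * (α - (ψ : ℂ)) / (β : ℂ))

/-- The integral of `f : ℂ → ℂ` over the Carslaw contour `A_θ(c)`.  The upper piece runs
from `θ+π+i∞` down to `θ+π+ic`, horizontally to `θ−π+ic`, then up to `θ−π+i∞`; the lower
piece runs from `θ−π−i∞` up to `θ−π−ic`, horizontally to `θ+π−ic`, then down to
`θ+π−i∞`. -/
noncomputable def AInt (f : ℂ → ℂ) (θ c : ℝ) : ℂ :=
  (-Complex.I) * (∫ s in Set.Ioi c, f (((θ + Real.pi : ℝ) : ℂ) + (s : ℂ) * Complex.I))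
    - (∫ x in (θ - Real.pi)..(θ + Real.pi), f ((x : ℂ) + (c : ℂ) * Complex.I))
    + Complex.I * (∫ s in Set.Ioi c, f (((θ - Real.pi : ℝ) : ℂ) + (s : ℂ) * Complex.I))
    + Complex.I * (∫ s in Set.Iio (-c), f (((θ - Real.pi : ℝ) : ℂ) + (s : ℂ) * Complex.I))
    + (∫ x in (θ - Real.pi)..(θ + Real.pi), f ((x : ℂ) - (c : ℂ) * Complex.I))
    - Complex.I * (∫ s in Set.Iio (-c), f (((θ + Real.pi : ℝ) : ℂ) + (s : ℂ) * Complex.I))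

/-- The Carslaw heat kernel `H_β(r,θ,ρ,ψ;t)` on the cone of angle `β`:
`H_β = (8πβit)⁻¹ e^{−(r²+ρ²)/(4t)} ∫_{A_θ(c)} e^{rρcos(α−θ)/(2t)} cot(π(α−ψ)/β) dα`
(the value of the contour integral is independent of the height `c > 0`; we take `c = 1`). -/
noncomputable def carslawH (β t r θ ρ ψ : ℝ) : ℂ :=
  (1 / (8 * (Real.pi : ℂ) * (β : ℂ) * Complex.I * (t : ℂ))) *
    Complex.exp (-((r : ℂ) ^ 2 + (ρ : ℂ) ^ 2) / (4 * (t : ℂ))) *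
    AInt (carslawF β t r ρ θ ψ) θ 1

/-!
The reflection `α ↦ θ + ψ − α` exchanges the roles of `(r, θ)` and `(ρ, ψ)` in the integrand:
since `cos` is even and `cot` is odd, it turns `carslawF β t r ρ θ ψ` into
`−carslawF β t ρ r ψ θ`. The same reflection maps the contour `A_θ(c)` onto `A_ψ(c)`,
swapping its upper and lower pieces and reversing orientation, which absorbs the sign.
-/

open Set Real

theorem Complex.cot_neg (z : ℂ) : Complex.cot (-z) = -Complex.cot z := by
  simp [Complex.cot_eq_cos_div_sin, div_neg]

theorem carslawF_eq_neg_carslawF_reflect (β t r ρ θ ψ : ℝ) (α : ℂ) :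
    carslawF β t r ρ θ ψ α = -carslawF β t ρ r ψ θ (((θ + ψ : ℝ) : ℂ) - α) := by
  have hcos : ((θ + ψ : ℝ) : ℂ) - α - ψ = -(α - θ) := by push_cast; ring
  have hcot :
      (Real.pi : ℂ) * (((θ + ψ : ℝ) : ℂ) - α - θ) / β = -(Real.pi * (α - ψ) / β) := by
    push_cast; ring
  rw [carslawF, carslawF, hcos, hcot, Complex.cos_neg, Complex.cot_neg]
  ring_nf

section Reflection

variable {f g : ℂ → ℂ} {a : ℝ}

theorem setIntegral_Ioi_vertical_of_reflect (hfg : ∀ α, f α = -g ((a : ℂ) - α)) (x c : ℝ) :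
    ∫ s in Ioi c, f (x + s * Complex.I) =
      -∫ s in Iio (-c), g (((a - x : ℝ) : ℂ) + s * Complex.I) := by
  have hpt : ∀ s : ℝ,
      f (x + s * Complex.I) = -g (((a - x : ℝ) : ℂ) + ((-s : ℝ) : ℂ) * Complex.I) := by
    intro s
    rw [hfg]
    push_cast
    ring_nf
  simp_rw [hpt, integral_neg, integral_comp_neg_Ioi c
    (fun s : ℝ => g (((a - x : ℝ) : ℂ) + s * Complex.I)), integral_Iic_eq_integral_Iio]

theorem setIntegral_Iio_vertical_of_reflect (hfg : ∀ α, f α = -g ((a : ℂ) - α)) (x c : ℝ) :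
    ∫ s in Iio (-c), f (x + s * Complex.I) =
      -∫ s in Ioi c, g (((a - x : ℝ) : ℂ) + s * Complex.I) := by
  have hgf : ∀ α, g α = -f ((a : ℂ) - α) := fun α => by rw [hfg, sub_sub_cancel, neg_neg]
  rw [setIntegral_Ioi_vertical_of_reflect hgf, sub_sub_cancel, neg_neg]

theorem intervalIntegral_horizontal_of_reflect (hfg : ∀ α, f α = -g ((a : ℂ) - α))
    (u v : ℝ) (w : ℂ) :
    ∫ x in u..v, f (x + w) = -∫ x in (a - v)..(a - u), g (x - w) := by
  have hpt : ∀ x : ℝ, f (x + w) = -g (((a - x : ℝ) : ℂ) - w) := by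
    intro x
    rw [hfg]
    push_cast
    ring_nf
  simp_rw [hpt, intervalIntegral.integral_neg,
    intervalIntegral.integral_comp_sub_left (fun x : ℝ => g (x - w)) a]

theorem AInt_eq_of_reflect (hfg : ∀ α, f α = -g ((a : ℂ) - α)) (θ c : ℝ) :
    AInt f θ c = AInt g (a - θ) c := by
  have hu := intervalIntegral_horizontal_of_reflect hfg (θ - π) (θ + π) (c * Complex.I)
  have hl := intervalIntegral_horizontal_of_reflect hfg (θ - π) (θ + π) (-(c * Complex.I))
  simp only [sub_neg_eq_add, ← sub_eq_add_neg] at hl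
  rw [AInt, AInt, setIntegral_Ioi_vertical_of_reflect hfg, setIntegral_Ioi_vertical_of_reflect hfg,
    setIntegral_Iio_vertical_of_reflect hfg, setIntegral_Iio_vertical_of_reflect hfg, hu, hl,
    show a - (θ + π) = a - θ - π by ring, show a - (θ - π) = a - θ + π by ring]
  ring

end Reflection

theorem stmt_4_general (β t r ρ θ ψ : ℝ) :
    carslawH β t r θ ρ ψ = carslawH β t ρ ψ r θ := by
  have hA : AInt (carslawF β t r ρ θ ψ) θ 1 = AInt (carslawF β t ρ r ψ θ) ψ 1 := by
    rw [AInt_eq_of_reflect (carslawF_eq_neg_carslawF_reflect β t r ρ θ ψ), add_sub_cancel_left]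
  rw [carslawH, carslawH, hA, add_comm ((r : ℂ) ^ 2)]

/-- the Carslaw heat kernel is symmetric under interchange of the two points
`(r,θ)` and `(ρ,ψ)` of the cone: `H_β(r,θ,ρ,ψ;t) = H_β(ρ,ψ,r,θ;t)`. -/
theorem stmt_4 (β t r ρ θ ψ : ℝ) (hβ : 0 < β) (ht : 0 < t) (hr : 0 < r) (hρ : 0 < ρ) :
    carslawH β t r θ ρ ψ = carslawH β t ρ ψ r θ :=
  stmt_4_general β t r ρ θ ψ
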